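/- arXiv:2512.21152 — 2 statements merged into one kernel-verified Lean document; each statement's English description precedes it below -/
import Mathlib

section
/- For the greedy algorithm maximizing a monotone submodular function f with f(∅) = 0 under a cardinality constraint B, the marginal gain at each step satisfies: if C_t is the greedy set after t steps and C* is any set of size at most B, then max_{v ∉ C_t} [f(C_t ∪ {v}) − f(C_t)] ≥ (f(C*) − f(C_t)) / B. -/
/-- Greedy marginal gain bound for monotone submodular maximization: if `Ct` is the
current greedy set (with some unselected element remaining) and `C*` has size at
most `B`, then the best marginal gain over `v ∉ Ct` is at least
`(f C* − f Ct) / B`. -/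
theorem greedy_marginal_gain {V : Type*} [DecidableEq V] [Fintype V]
    (f : Finset V → ℝ)
    (hmono : ∀ A B : Finset V, A ⊆ B → f A ≤ f B)
    (hsub : ∀ A B : Finset V, A ⊆ B → ∀ v ∉ B,
      f (insert v A) - f A ≥ f (insert v B) - f B)
    (hempty : f ∅ = 0)
    (B : ℕ) (hB : 0 < B) (Ct Cstar : Finset V) (hCstar : Cstar.card ≤ B)
    (hne : (Finset.univ \ Ct).Nonempty) :
    (Finset.univ \ Ct).sup' hne (fun v => f (insert v Ct) - f Ct) ≥
      (f Cstar - f Ct) / B := by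
  set M := (Finset.univ \ Ct).sup' hne (fun v => f (insert v Ct) - f Ct) with hMdef
  have hM0 : 0 ≤ M := by
    obtain ⟨v, hv⟩ := hne
    have h1 : f Ct ≤ f (insert v Ct) := hmono _ _ (Finset.subset_insert _ _)
    have h2 : f (insert v Ct) - f Ct ≤ M := Finset.le_sup' (fun v => f (insert v Ct) - f Ct) hv
    linarith
  have key : ∀ S : Finset V,
      f (Ct ∪ S) - f Ct ≤ ∑ v ∈ S \ Ct, (f (insert v Ct) - f Ct) := by
    intro S
    induction S using Finset.induction_on with
    | empty => simp
    | @insert a S ha ih =>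
      by_cases haCt : a ∈ Ct
      · rw [Finset.union_insert, Finset.insert_eq_self.mpr (Finset.mem_union_left S haCt),
          Finset.insert_sdiff_of_mem S haCt]
        exact ih
      · have haUS : a ∉ Ct ∪ S := by simp [haCt, ha]
        have hstep : f (insert a (Ct ∪ S)) - f (Ct ∪ S) ≤ f (insert a Ct) - f Ct :=
          hsub Ct (Ct ∪ S) Finset.subset_union_left a haUS
        rw [Finset.union_insert, Finset.insert_sdiff_of_notMem S haCt,
          Finset.sum_insert (by simp [ha])]
        linarith
  have h1 : f Cstar ≤ f (Ct ∪ Cstar) := hmono _ _ Finset.subset_union_right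
  have h2 := key Cstar
  have h3 : ∑ v ∈ Cstar \ Ct, (f (insert v Ct) - f Ct) ≤ (Cstar \ Ct).card • M := by
    apply Finset.sum_le_card_nsmul
    intro v hv
    rw [Finset.mem_sdiff] at hv
    exact Finset.le_sup' (fun v => f (insert v Ct) - f Ct) (Finset.mem_sdiff.mpr ⟨Finset.mem_univ v, hv.2⟩)
  rw [nsmul_eq_mul] at h3
  have hcard : ((Cstar \ Ct).card : ℝ) ≤ B := by
    exact_mod_cast le_trans (Finset.card_le_card Finset.sdiff_subset) hCstar
  have h4 : ((Cstar \ Ct).card : ℝ) * M ≤ B * M := mul_le_mul_of_nonneg_right hcard hM0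
  rw [ge_iff_le, div_le_iff₀ (by exact_mod_cast hB)]
  nlinarith
end

section
/- For a monotone submodular function f with f(∅) = 0 and the recurrence f(C_{t+1}) − f(C_t) ≥ (f(C*) − f(C_t))/B for t = 0, …, B−1 with C_0 = ∅, the final greedy set satisfies f(C_B) ≥ (1 − (1 − 1/B)^B) · f(C*) ≥ (1 − 1/e) · f(C*). -/
/-- Greedy recursion for monotone submodular maximization: if `a 0 = 0`,
`fstar ≥ 0`, and `a (t+1) − a t ≥ (fstar − a t)/B` for all `t < B`, then
`a B ≥ (1 − (1 − 1/B)^B) · fstar ≥ (1 − 1/e) · fstar`. -/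
theorem greedy_one_minus_one_over_e (B : ℕ) (hB : 1 ≤ B)
    (fstar : ℝ) (hfstar : 0 ≤ fstar) (a : ℕ → ℝ) (h0 : a 0 = 0)
    (hrec : ∀ t < B, a (t + 1) - a t ≥ (fstar - a t) / B) :
    a B ≥ (1 - (1 - 1 / (B : ℝ)) ^ B) * fstar ∧
    (1 - (1 - 1 / (B : ℝ)) ^ B) * fstar ≥ (1 - 1 / Real.exp 1) * fstar := by
  have hBpos : (0 : ℝ) < B := by exact_mod_cast Nat.lt_of_lt_of_le Nat.zero_lt_one hB
  have hB1 : (1 : ℝ) ≤ (B : ℝ) := by exact_mod_cast hB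
  have hq0 : (0 : ℝ) ≤ 1 - 1 / (B : ℝ) := by
    have : 1 / (B : ℝ) ≤ 1 := by
      rw [div_le_one hBpos]; exact hB1
    linarith
  have key : ∀ t ≤ B, fstar - a t ≤ (1 - 1 / (B : ℝ)) ^ t * fstar := by
    intro t ht
    induction t with
    | zero => simp [h0]
    | succ n ih =>
      have hn : n < B := ht
      have ihn := ih (Nat.le_of_lt hn)
      have hr := hrec n hn
      have h1 : fstar - a (n + 1) ≤ (1 - 1 / (B : ℝ)) * (fstar - a n) := by
        have : (fstar - a n) / B = (1 / (B : ℝ)) * (fstar - a n) := by ring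
        rw [ge_iff_le, this] at hr
        nlinarith
      calc fstar - a (n + 1) ≤ (1 - 1 / (B : ℝ)) * (fstar - a n) := h1
        _ ≤ (1 - 1 / (B : ℝ)) * ((1 - 1 / (B : ℝ)) ^ n * fstar) := by
            exact mul_le_mul_of_nonneg_left ihn hq0
        _ = (1 - 1 / (B : ℝ)) ^ (n + 1) * fstar := by ring
  have h1 : a B ≥ (1 - (1 - 1 / (B : ℝ)) ^ B) * fstar := by
    have := key B le_rfl
    nlinarith
  refine ⟨h1, ?_⟩
  have hexp : (1 - 1 / (B : ℝ)) ^ B ≤ 1 / Real.exp 1 := by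
    have h2 : (1 - 1 / (B : ℝ)) ^ B ≤ (Real.exp (-(1 / (B : ℝ)))) ^ B := by
      apply pow_le_pow_left₀ hq0
      linarith [Real.add_one_le_exp (-(1 / (B : ℝ)))]
    have h3 : (Real.exp (-(1 / (B : ℝ)))) ^ B = Real.exp (-1) := by
      rw [← Real.exp_nat_mul]
      congr 1
      field_simp
    rw [h3] at h2
    rw [Real.exp_neg] at h2
    simpa [one_div] using h2
  have : (1 - 1 / Real.exp 1) ≤ 1 - (1 - 1 / (B : ℝ)) ^ B := by linarith
  exact mul_le_mul_of_nonneg_right this hfstar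
end
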